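/- arXiv:1009.2901 — 4 statements merged into one kernel-verified Lean document; each statement's English description precedes it below -/
import Mathlib

section
/- Generalized-eigenvalue characterization of near-double eigenvalues: assume 1+ε ≠ 0 and let v1, v2 ∈ ℂ^N be nonzero vectors and λ ∈ ℂ. Then λ·Δ0(ε)·(v1 ⊗ v2) = Δ1(ε)·(v1 ⊗ v2) holds if and only if there exists E ∈ ℂ such that H(λ)·v1 = E·v1 and H(λ)·v2 = (1+ε)·E·v2; that is, the decomposable eigenvectors of the pencil (Δ0(ε), Δ1(ε)) with eigenvalue λ correspond exactly to the values λ at which H(λ) has a pair of eigenvalues of the form E and (1+ε)·E. -/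
open Matrix
open scoped Kronecker

/-- Kronecker product of two vectors: `(v1 ⊗ v2)(i,j) = v1 i * v2 j`. -/
noncomputable def kronVec {N : ℕ} (v1 v2 : Fin N → ℂ) : Fin N × Fin N → ℂ :=
  fun p => v1 p.1 * v2 p.2

/-- `Δ0(ε) = −(I ⊗ V) + (1+ε)·(V ⊗ I)`. -/
noncomputable def Delta0 {N : ℕ} (V : Matrix (Fin N) (Fin N) ℂ) (ε : ℂ) :
    Matrix (Fin N × Fin N) (Fin N × Fin N) ℂ :=
  -((1 : Matrix (Fin N) (Fin N) ℂ) ⊗ₖ V) + (1 + ε) • (V ⊗ₖ (1 : Matrix (Fin N) (Fin N) ℂ))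

/-- `Δ1(ε) = (I ⊗ H0) − (1+ε)·(H0 ⊗ I)`. -/
noncomputable def Delta1 {N : ℕ} (H0 : Matrix (Fin N) (Fin N) ℂ) (ε : ℂ) :
    Matrix (Fin N × Fin N) (Fin N × Fin N) ℂ :=
  ((1 : Matrix (Fin N) (Fin N) ℂ) ⊗ₖ H0) - (1 + ε) • (H0 ⊗ₖ (1 : Matrix (Fin N) (Fin N) ℂ))

/-!
On a decomposable vector the pencil acts factor by factor: `λ Δ0(ε) - Δ1(ε)` sends `v1 ⊗ v2` to
`(1 + ε) H(λ) v1 ⊗ v2 - v1 ⊗ H(λ) v2`. Two nonzero rank-one tensors agree exactly when their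
factors are proportional with reciprocal scalars, which produces the common eigenvalue `E`.
-/

namespace Matrix

variable {R l m n p : Type*}

theorem kronecker_mulVec_vec_vecMulVec [NonUnitalCommSemiring R] [Fintype m] [Fintype n]
    (A : Matrix l m R) (B : Matrix p n R) (w : m → R) (v : n → R) :
    (B ⊗ₖ A) *ᵥ vec (vecMulVec w v) = vec (vecMulVec (A *ᵥ w) (B *ᵥ v)) := by
  rw [kronecker_mulVec_vec, mul_vecMulVec, vecMulVec_mul, vecMul_transpose]

theorem vecMulVec_eq_vecMulVec_iff [Field R] {x u : m → R} {y w : n → R}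
    (hx : x ≠ 0) (hw : w ≠ 0) :
    vecMulVec x y = vecMulVec u w ↔ ∃ c : R, u = c • x ∧ y = c • w := by
  constructor
  · intro h
    have h' : ∀ i j, x i * y j = u i * w j := fun i j => by
      simpa only [vecMulVec_apply] using congrFun (congrFun h i) j
    obtain ⟨i₀, hi₀⟩ := Function.ne_iff.mp hx
    obtain ⟨j₀, hj₀⟩ := Function.ne_iff.mp hw
    have hu : u = (y j₀ / w j₀) • x := by
      ext i
      rw [Pi.smul_apply, smul_eq_mul, div_mul_eq_mul_div, eq_div_iff hj₀, ← h' i j₀, mul_comm]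
    refine ⟨y j₀ / w j₀, hu, ?_⟩
    ext j
    apply mul_left_cancel₀ hi₀
    rw [h' i₀ j, hu, Pi.smul_apply, Pi.smul_apply, smul_eq_mul, smul_eq_mul]
    ring
  · rintro ⟨c, rfl, rfl⟩
    rw [smul_vecMulVec, vecMulVec_smul]

end Matrix

theorem kronVec_eq_vec_vecMulVec {N : ℕ} (v1 v2 : Fin N → ℂ) :
    kronVec v1 v2 = vec (vecMulVec v2 v1) := by
  rw [← transpose_vecMulVec]
  rfl

theorem smul_Delta0_mulVec_kronVec_sub_Delta1_mulVec_kronVec {N : ℕ}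
    (H0 V : Matrix (Fin N) (Fin N) ℂ) (ε lam : ℂ) (v1 v2 : Fin N → ℂ) :
    lam • (Delta0 V ε) *ᵥ kronVec v1 v2 - (Delta1 H0 ε) *ᵥ kronVec v1 v2 =
      vec (vecMulVec v2 (((1 + ε) • (H0 + lam • V)) *ᵥ v1) -
        vecMulVec ((H0 + lam • V) *ᵥ v2) v1) := by
  simp only [Delta0, Delta1, kronVec_eq_vec_vecMulVec, add_mulVec, sub_mulVec, neg_mulVec,
    smul_mulVec, kronecker_mulVec_vec_vecMulVec, one_mulVec]
  ext ⟨i, j⟩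
  simp only [vec, Pi.sub_apply, Pi.add_apply, Pi.smul_apply, Pi.neg_apply, Matrix.sub_apply,
    vecMulVec_apply, smul_eq_mul]
  ring

theorem stmt_0_general {N : ℕ} (H0 V : Matrix (Fin N) (Fin N) ℂ)
    (ε : ℂ) (hε : 1 + ε ≠ 0) (v1 v2 : Fin N → ℂ) (hv1 : v1 ≠ 0) (hv2 : v2 ≠ 0) (lam : ℂ) :
    lam • (Delta0 V ε).mulVec (kronVec v1 v2) = (Delta1 H0 ε).mulVec (kronVec v1 v2) ↔
      ∃ E : ℂ, (H0 + lam • V).mulVec v1 = E • v1 ∧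
        (H0 + lam • V).mulVec v2 = ((1 + ε) * E) • v2 := by
  rw [← sub_eq_zero, smul_Delta0_mulVec_kronVec_sub_Delta1_mulVec_kronVec, vec_eq_zero_iff,
    sub_eq_zero, vecMulVec_eq_vecMulVec_iff hv2 hv1, smul_mulVec]
  constructor
  · rintro ⟨c, h2, h1⟩
    refine ⟨c / (1 + ε), ?_, by rwa [mul_div_cancel₀ c hε]⟩
    rw [div_eq_inv_mul, mul_smul, ← h1, inv_smul_smul₀ hε]
  · rintro ⟨E, h1, h2⟩
    exact ⟨(1 + ε) * E, h2, by rw [h1, smul_smul]⟩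

/-- Generalized-eigenvalue characterization of near-double eigenvalues:
for nonzero `v1, v2`, `λ·Δ0(ε)·(v1 ⊗ v2) = Δ1(ε)·(v1 ⊗ v2)` iff there is `E`
with `H(λ)·v1 = E·v1` and `H(λ)·v2 = (1+ε)·E·v2`. -/
theorem stmt_0 {N : ℕ} (hN : 0 < N) (H0 V : Matrix (Fin N) (Fin N) ℂ)
    (ε : ℂ) (hε : 1 + ε ≠ 0) (v1 v2 : Fin N → ℂ) (hv1 : v1 ≠ 0) (hv2 : v2 ≠ 0) (lam : ℂ) :
    lam • (Delta0 V ε).mulVec (kronVec v1 v2) = (Delta1 H0 ε).mulVec (kronVec v1 v2) ↔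
      ∃ E : ℂ, (H0 + lam • V).mulVec v1 = E • v1 ∧
        (H0 + lam • V).mulVec v2 = ((1 + ε) * E) • v2 :=
  stmt_0_general H0 V ε hε v1 v2 hv1 hv2 lam
end

section
/- Spurious solutions at zero eigenvalues: if λ ∈ ℂ and v ∈ ℂ^N is a nonzero vector with H(λ)·v = 0 (i.e., 0 is an eigenvalue of H(λ)), then for every ε ∈ ℂ the decomposable vector v ⊗ v satisfies λ·Δ0(ε)·(v ⊗ v) = Δ1(ε)·(v ⊗ v); that is, λ is an eigenvalue of the pencil (Δ0(ε), Δ1(ε)) with eigenvector v ⊗ v. -/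
open Matrix
open scoped Kronecker

lemma kron_mulVec {N : ℕ} (A B : Matrix (Fin N) (Fin N) ℂ) (v w : Fin N → ℂ)
    (p : Fin N × Fin N) :
    (A ⊗ₖ B).mulVec (kronVec v w) p = A.mulVec v p.1 * B.mulVec w p.2 := by
  simp only [mulVec, dotProduct, kronVec, kroneckerMap_apply, Fintype.sum_prod_type,
    Finset.sum_mul, Finset.mul_sum]
  rw [Finset.sum_comm]
  apply Finset.sum_congr rfl
  intro i _
  apply Finset.sum_congr rfl
  intro j _
  ring

/-- Spurious solutions at zero eigenvalues: if `H(λ)·v = 0` with `v ≠ 0`, then for all `ε`,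
`λ·Δ0(ε)·(v ⊗ v) = Δ1(ε)·(v ⊗ v)`. -/
theorem stmt_3 {N : ℕ} (hN : 0 < N) (H0 V : Matrix (Fin N) (Fin N) ℂ)
    (lam : ℂ) (v : Fin N → ℂ) (hv : v ≠ 0) (h0 : (H0 + lam • V).mulVec v = 0) (ε : ℂ) :
    lam • (Delta0 V ε).mulVec (kronVec v v) = (Delta1 H0 ε).mulVec (kronVec v v) := by
  have hH : ∀ i, H0.mulVec v i = -(lam * V.mulVec v i) := by
    intro i
    have := congrFun h0 i
    simp only [add_mulVec, smul_mulVec, Pi.add_apply, Pi.smul_apply, smul_eq_mul,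
      Pi.zero_apply] at this
    linear_combination this
  funext p
  simp only [Delta0, Delta1, Pi.smul_apply, smul_eq_mul, add_mulVec, sub_mulVec, neg_mulVec,
    smul_mulVec, Pi.add_apply, Pi.sub_apply, Pi.neg_apply, Pi.smul_apply, smul_eq_mul,
    kron_mulVec, one_mulVec]
  rw [hH p.1, hH p.2]
  ring
end

section
/- Eigenvalue paths that start away from an unbranched ground-state branch cannot terminate on it (second statement of Proposition 1, precise form): let H0 and V be N×N complex matrices and let p : [0,1] → ℂ be continuous. Suppose G : [0,1] → ℂ is continuous and, for every θ ∈ [0,1], G(θ) is a simple eigenvalue of H0 + p(θ)·V (i.e., a root of multiplicity one of its characteristic polynomial). If F : [0,1] → ℂ is continuous, F(θ) is an eigenvalue of H0 + p(θ)·V for every θ ∈ [0,1], and F(0) ≠ G(0), then F(1) ≠ G(1). -/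
open Matrix Polynomial Finset

/-- Divided-difference identity for polynomial evaluations. -/
lemma aux_eval_sub_eval (f : Polynomial ℂ) {n : ℕ} (hn : f.natDegree < n) (a b : ℂ) :
    f.eval b - f.eval a
      = (b - a) * ∑ k ∈ range n, f.coeff k * ∑ i ∈ range k, b ^ i * a ^ (k - 1 - i) := by
  rw [eval_eq_sum_range' hn, eval_eq_sum_range' hn, ← Finset.sum_sub_distrib,
    Finset.mul_sum]
  refine Finset.sum_congr rfl fun k _ => ?_
  linear_combination -f.coeff k * geom_sum₂_mul b a k

/-- The diagonal value of the divided difference is the derivative. -/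
lemma aux_diag_eq_deriv (f : Polynomial ℂ) {n : ℕ} (hn : f.natDegree < n) (a : ℂ) :
    ∑ k ∈ range n, f.coeff k * ∑ i ∈ range k, a ^ i * a ^ (k - 1 - i)
      = (Polynomial.derivative f).eval a := by
  conv_rhs => rw [f.as_sum_range' n hn]
  rw [map_sum, eval_finset_sum]
  refine Finset.sum_congr rfl fun k _ => ?_
  rw [← C_mul_X_pow_eq_monomial, derivative_C_mul_X_pow]
  have h1 : ∀ i ∈ range k, a ^ i * a ^ (k - 1 - i) = a ^ (k - 1) := by
    intro i hi
    rw [Finset.mem_range] at hi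
    rw [← pow_add]
    congr 1
    omega
  rw [Finset.sum_congr rfl h1, Finset.sum_const, Finset.card_range]
  rw [eval_mul, eval_C, eval_pow, eval_X, nsmul_eq_mul]
  ring

/-- At a simple root the derivative does not vanish. -/
lemma aux_deriv_ne_zero (f : Polynomial ℂ) (a : ℂ) (hf : f ≠ 0)
    (h1 : f.rootMultiplicity a = 1) :
    (Polynomial.derivative f).eval a ≠ 0 := by
  have hq := Polynomial.eval_divByMonic_pow_rootMultiplicity_ne_zero a hf
  have hfe := Polynomial.pow_mul_divByMonic_rootMultiplicity_eq f a
  rw [h1, pow_one] at hfe hq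
  have hder : Polynomial.derivative f
      = f /ₘ (X - C a) + (X - C a) * Polynomial.derivative (f /ₘ (X - C a)) := by
    conv_lhs => rw [← hfe]
    rw [derivative_mul, derivative_sub, derivative_X, derivative_C, sub_zero, one_mul]
  rw [hder]
  simpa using hq

set_option maxRecDepth 4000 in
/-- Eigenvalue paths that start away from an unbranched (everywhere simple) ground-state
branch cannot terminate on it. -/
theorem stmt_15 {N : ℕ} (hN : 0 < N) (H0 V : Matrix (Fin N) (Fin N) ℂ)
    (p : ℝ → ℂ) (hp : ContinuousOn p (Set.Icc 0 1))
    (G : ℝ → ℂ) (hG : ContinuousOn G (Set.Icc 0 1))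
    (hGsimple : ∀ θ ∈ Set.Icc (0:ℝ) 1,
      (H0 + p θ • V).charpoly.rootMultiplicity (G θ) = 1)
    (F : ℝ → ℂ) (hF : ContinuousOn F (Set.Icc 0 1))
    (hFroot : ∀ θ ∈ Set.Icc (0:ℝ) 1, (H0 + p θ • V).charpoly.IsRoot (F θ))
    (h00 : F 0 ≠ G 0) :
    F 1 ≠ G 1 := by
  intro h11
  classical
  -- The charpoly of `H0 + w • V` has coefficients polynomial in `w`.
  set A : Matrix (Fin N) (Fin N) ℂ[X] :=
    fun i j => Polynomial.C (H0 i j) + Polynomial.X * Polynomial.C (V i j) with hA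
  set Q : Polynomial ℂ[X] := A.charpoly with hQ
  have hmap : ∀ w : ℂ, (H0 + w • V).charpoly = Q.map (Polynomial.evalRingHom w) := by
    intro w
    have hAm : A.map (Polynomial.evalRingHom w) = H0 + w • V := by
      ext i j
      show Polynomial.eval w (Polynomial.C (H0 i j) + Polynomial.X * Polynomial.C (V i j))
        = (H0 + w • V) i j
      simp only [Matrix.add_apply, Matrix.smul_apply, smul_eq_mul, Polynomial.eval_add,
        Polynomial.eval_mul, Polynomial.eval_C, Polynomial.eval_X]
    rw [hQ, ← Matrix.charpoly_map, hAm]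
  have hcoeff : ∀ (w : ℂ) (k : ℕ),
      (H0 + w • V).charpoly.coeff k = (Q.coeff k).eval w := by
    intro w k
    rw [hmap w, Polynomial.coeff_map]
    rfl
  have hdeg : ∀ w : ℂ, (H0 + w • V).charpoly.natDegree < N + 1 := by
    intro w
    rw [Matrix.charpoly_natDegree_eq_dim, Fintype.card_fin]
    omega
  -- the divided-difference function
  set Φ : ℝ → ℂ := fun θ =>
    ∑ k ∈ range (N + 1), (Q.coeff k).eval (p θ) *
      ∑ i ∈ range k, (F θ) ^ i * (G θ) ^ (k - 1 - i) with hΦ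
  have hΦeq : ∀ θ : ℝ, Φ θ
      = ∑ k ∈ range (N + 1), (H0 + p θ • V).charpoly.coeff k *
          ∑ i ∈ range k, (F θ) ^ i * (G θ) ^ (k - 1 - i) := by
    intro θ
    simp only [hΦ]
    exact Finset.sum_congr rfl fun k _ => by rw [hcoeff]
  have hΦcont : ContinuousOn Φ (Set.Icc 0 1) := by
    apply continuousOn_finset_sum
    intro k _
    refine ContinuousOn.mul ((Polynomial.continuous (Q.coeff k)).comp_continuousOn hp) ?_
    apply continuousOn_finset_sum
    intro i _
    exact (hF.pow i).mul (hG.pow _)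
  have hGroot : ∀ θ ∈ Set.Icc (0:ℝ) 1, (H0 + p θ • V).charpoly.IsRoot (G θ) := by
    intro θ hθ
    have h1 := hGsimple θ hθ
    have hne : (H0 + p θ • V).charpoly ≠ 0 := (Matrix.charpoly_monic _).ne_zero
    have h2 : 0 < (H0 + p θ • V).charpoly.rootMultiplicity (G θ) := by omega
    exact ((Polynomial.rootMultiplicity_pos hne).mp h2)
  -- key identity: (F - G) * Φ = 0 on [0,1]
  have hkey : ∀ θ ∈ Set.Icc (0:ℝ) 1, (F θ - G θ) * Φ θ = 0 := by
    intro θ hθ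
    have h1 := aux_eval_sub_eval (H0 + p θ • V).charpoly (hdeg (p θ)) (G θ) (F θ)
    have hFe : (H0 + p θ • V).charpoly.eval (F θ) = 0 := hFroot θ hθ
    have hGe : (H0 + p θ • V).charpoly.eval (G θ) = 0 := hGroot θ hθ
    rw [hFe, hGe, sub_zero] at h1
    rw [hΦeq θ]
    exact h1.symm
  -- on the diagonal, Φ is the (nonzero) derivative at the simple root
  have hdiag : ∀ θ ∈ Set.Icc (0:ℝ) 1, F θ = G θ → Φ θ ≠ 0 := by
    intro θ hθ hFG
    have hne : (H0 + p θ • V).charpoly ≠ 0 := (Matrix.charpoly_monic _).ne_zero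
    have hd := aux_deriv_ne_zero (H0 + p θ • V).charpoly (G θ) hne (hGsimple θ hθ)
    have h2 := aux_diag_eq_deriv (H0 + p θ • V).charpoly (hdeg (p θ)) (G θ)
    rw [hΦeq θ, hFG]
    rw [← h2] at hd
    exact hd
  -- connectedness argument on the subtype [0,1]
  haveI : PreconnectedSpace (Set.Icc (0:ℝ) 1) :=
    Subtype.preconnectedSpace isPreconnected_Icc
  set T : Set (Set.Icc (0:ℝ) 1) := {x | Φ x.1 ≠ 0} with hT
  have hTopen : IsOpen T := by
    have hc : Continuous fun x : Set.Icc (0:ℝ) 1 => Φ x.1 := hΦcont.restrict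
    exact isOpen_compl_singleton.preimage hc
  have hTeq : T = {x : Set.Icc (0:ℝ) 1 | F x.1 = G x.1} := by
    ext x
    constructor
    · intro hx
      have h1 := hkey x.1 x.2
      rcases mul_eq_zero.mp h1 with h | h
      · exact sub_eq_zero.mp h
      · exact absurd h hx
    · intro hx
      exact hdiag x.1 x.2 hx
  have hTclosed : IsClosed T := by
    rw [hTeq]
    exact isClosed_eq hF.restrict hG.restrict
  have hTne : T.Nonempty := by
    refine ⟨⟨1, by norm_num⟩, ?_⟩
    rw [hTeq]
    exact h11
  have huniv : T = Set.univ := IsClopen.eq_univ ⟨hTclosed, hTopen⟩ hTne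
  have h0 : (⟨0, by norm_num⟩ : Set.Icc (0:ℝ) 1) ∈ T := huniv ▸ Set.mem_univ _
  rw [hTeq] at h0
  exact h00 h0
end

section
/- Analytic persistence of a simple eigenvalue (existence of the unbranched eigenvalue map near the origin): let H0 and V be N×N complex matrices and suppose E0 ∈ ℂ is a simple eigenvalue of H0 (i.e., a root of multiplicity one of the characteristic polynomial of H0). Then there exist r > 0 and a function f : ℂ → ℂ that is analytic on the open ball of radius r centered at 0, such that f(0) = E0 and, for every λ with |λ| < r, f(λ) is a simple eigenvalue of H0 + λ·V. -/
/-!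
The eigenvalues of `H0 + λ • V` are the roots in `z` of `det (z - H0 - λ • V)`, a polynomial in
`(λ, z)`. At a simple root its `z`-derivative is nonzero, so the analytic implicit function theorem
yields an analytic root branch through `(0, E0)`; by continuity the `z`-derivative stays nonzero
along the branch, so the root stays simple.
-/

open Matrix Polynomial Filter Topology

namespace Polynomial

theorem rootMultiplicity_eq_one_iff {R : Type*} [CommRing R] {p : R[X]} {x : R} :
    p.rootMultiplicity x = 1 ↔ p.IsRoot x ∧ ¬ p.derivative.IsRoot x := by
  rcases eq_or_ne p 0 with rfl | hp
  · simp
  have h := one_lt_rootMultiplicity_iff_isRoot hp (t := x)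
  rw [← rootMultiplicity_pos hp] at h ⊢
  grind

variable {𝕜 : Type*} [NontriviallyNormedField 𝕜]

theorem analyticAt_evalEval (P : 𝕜[X][X]) (z : 𝕜 × 𝕜) :
    AnalyticAt 𝕜 (fun z : 𝕜 × 𝕜 => P.evalEval z.1 z.2) z := by
  induction P using Polynomial.induction_on with
  | C q => simpa [evalEval_C, ← coe_aeval_eq_eval] using analyticAt_fst.aeval_polynomial q
  | add P Q hP hQ => simpa only [evalEval_add] using hP.fun_add hQ
  | monomial n q hP =>
    simpa only [pow_succ, ← mul_assoc, evalEval_mul, evalEval_X] using hP.fun_mul analyticAt_snd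

theorem deriv_evalEval (P : 𝕜[X][X]) (x y : 𝕜) :
    deriv (fun y => P.evalEval x y) y = P.derivative.evalEval x y := by
  simpa only [map_evalRingHom_eval, derivative_map] using (P.map (evalRingHom x)).deriv (x := y)

end Polynomial

section ImplicitFunction

variable {𝕜 : Type*} [NontriviallyNormedField 𝕜]

theorem ContinuousLinearMap.injective_fst_prod {L : 𝕜 × 𝕜 →L[𝕜] 𝕜} (hL : L (0, 1) ≠ 0) :
    Function.Injective ((ContinuousLinearMap.fst 𝕜 𝕜 𝕜).prod L) := by
  refine (injective_iff_map_eq_zero _).2 fun v hv => ?_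
  have hv₁ : v.1 = 0 := congrArg Prod.fst hv
  have hv₂ : v = v.2 • ((0 : 𝕜), (1 : 𝕜)) := Prod.ext (by simp [hv₁]) (by simp)
  have hL₂ : v.2 • L (0, 1) = 0 := by rw [← map_smul, ← hv₂]; exact congrArg Prod.snd hv
  rw [hv₂, (smul_eq_zero.1 hL₂).resolve_right hL, zero_smul]

theorem DifferentiableAt.fderiv_apply_zero_one {F : 𝕜 × 𝕜 → 𝕜} {a b : 𝕜}
    (hF : DifferentiableAt 𝕜 F (a, b)) :
    fderiv 𝕜 F (a, b) (0, 1) = deriv (fun y => F (a, y)) b :=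
  (hF.hasFDerivAt.comp_hasDerivAt b ((hasDerivAt_const b a).prodMk (hasDerivAt_id b))).deriv.symm

variable [CompleteSpace 𝕜]

/-- Analytic implicit function theorem: apply the analytic inverse function theorem to
`(x, y) ↦ (x, F (x, y))`, whose derivative is invertible exactly when `∂F/∂y ≠ 0`. -/
theorem AnalyticAt.exists_analyticAt_implicit {F : 𝕜 × 𝕜 → 𝕜} {a b : 𝕜}
    (hF : AnalyticAt 𝕜 F (a, b)) (hd : deriv (fun y => F (a, y)) b ≠ 0) :
    ∃ g : 𝕜 → 𝕜, AnalyticAt 𝕜 g a ∧ g a = b ∧ ∀ᶠ x in 𝓝 a, F (x, g x) = F (a, b) := by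
  set Φ : 𝕜 × 𝕜 → 𝕜 × 𝕜 := fun p => (p.1, F p)
  set L := (ContinuousLinearMap.fst 𝕜 𝕜 𝕜).prod (fderiv 𝕜 F (a, b))
  have hL : Function.Injective L := ContinuousLinearMap.injective_fst_prod <| by
    rwa [hF.differentiableAt.fderiv_apply_zero_one]
  set e := (LinearEquiv.ofInjectiveEndo (L : 𝕜 × 𝕜 →ₗ[𝕜] 𝕜 × 𝕜) hL).toContinuousLinearEquiv
  have hΦ' : fderiv 𝕜 Φ (a, b) = e := by
    rw [(hasFDerivAt_fst.prodMk hF.differentiableAt.hasFDerivAt).fderiv]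
    ext <;> simp [e, L, LinearEquiv.coe_ofInjectiveEndo]
  have hΦ : AnalyticAt 𝕜 Φ (a, b) := analyticAt_fst.prod hF
  have hstrict : HasStrictFDerivAt Φ (e : 𝕜 × 𝕜 →L[𝕜] 𝕜 × 𝕜) (a, b) :=
    hΦ' ▸ hΦ.hasStrictFDerivAt
  set ψ := hstrict.localInverse Φ e (a, b)
  have hψ : AnalyticAt 𝕜 ψ (Φ (a, b)) :=
    (hstrict.toOpenPartialHomeomorph Φ).analyticAt_symm'
      hstrict.mem_toOpenPartialHomeomorph_source hΦ hΦ'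
  have hline : Tendsto (fun x => (x, F (a, b))) (𝓝 a) (𝓝 (Φ (a, b))) :=
    (continuous_id.prodMk continuous_const).tendsto a
  refine ⟨fun x => (ψ (x, F (a, b))).2, ?_, ?_, ?_⟩
  · exact analyticAt_snd.comp (hψ.comp_of_eq (analyticAt_id.prod analyticAt_const) rfl)
  · exact congrArg Prod.snd hstrict.localInverse_apply_image
  · filter_upwards [hline.eventually hstrict.eventually_right_inverse] with x hx
    have hx₁ : (ψ (x, F (a, b))).1 = x := congrArg Prod.fst hx
    calc F (x, (ψ (x, F (a, b))).2) = F (ψ (x, F (a, b))) := congrArg F (Prod.ext hx₁.symm rfl)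
      _ = F (a, b) := congrArg Prod.snd hx

end ImplicitFunction

namespace Polynomial

variable {𝕜 : Type*} [NontriviallyNormedField 𝕜] [CompleteSpace 𝕜]

theorem exists_analyticAt_rootMultiplicity_eq_one (P : 𝕜[X][X]) {t₀ z₀ : 𝕜}
    (h : (P.map (evalRingHom t₀)).rootMultiplicity z₀ = 1) :
    ∃ g : 𝕜 → 𝕜, g t₀ = z₀ ∧
      ∀ᶠ t in 𝓝 t₀, AnalyticAt 𝕜 g t ∧ (P.map (evalRingHom t)).rootMultiplicity (g t) = 1 := by
  simp only [rootMultiplicity_eq_one_iff, IsRoot.def, derivative_map, map_evalRingHom_eval]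
    at h ⊢
  obtain ⟨hroot, hsimple⟩ := h
  obtain ⟨g, hg, hg₀, hgroot⟩ := (analyticAt_evalEval P (t₀, z₀)).exists_analyticAt_implicit
    (by rwa [deriv_evalEval])
  have hcont : ContinuousAt (fun t => P.derivative.evalEval t (g t)) t₀ :=
    (analyticAt_evalEval P.derivative (t₀, g t₀)).continuousAt.comp (f := fun t => (t, g t))
      (continuousAt_id.prodMk hg.continuousAt)
  refine ⟨g, hg₀, ?_⟩
  filter_upwards [hg.eventually_analyticAt, hgroot, hcont.eventually_ne (by rwa [hg₀])]
    with t hgt hroot_t hsimple_t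
  exact ⟨hgt, hroot_t.trans hroot, hsimple_t⟩

end Polynomial

namespace Matrix

variable {n R : Type*} [Fintype n] [DecidableEq n] [CommRing R]

/-- The characteristic polynomial of the pencil `A + T • B`: the inner variable is the parameter `T`,
the outer one the eigenvalue. -/
noncomputable def charpolyPencil (A B : Matrix n n R) : R[X][X] :=
  (A.map C + (X : R[X]) • B.map C).charpoly

theorem charpolyPencil_map_evalRingHom (A B : Matrix n n R) (t : R) :
    (charpolyPencil A B).map (evalRingHom t) = (A + t • B).charpoly := by
  rw [charpolyPencil, ← charpoly_map]
  congr 1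
  ext i j
  simp [mul_comm (B i j)]

end Matrix

theorem stmt_16_general {N : ℕ} (H0 V : Matrix (Fin N) (Fin N) ℂ)
    (E0 : ℂ) (hE0 : H0.charpoly.rootMultiplicity E0 = 1) :
    ∃ r : ℝ, 0 < r ∧ ∃ f : ℂ → ℂ, AnalyticOnNhd ℂ f (Metric.ball 0 r) ∧ f 0 = E0 ∧
      ∀ lam : ℂ, ‖lam‖ < r → (H0 + lam • V).charpoly.rootMultiplicity (f lam) = 1 := by
  obtain ⟨f, hf₀, hf⟩ := (charpolyPencil H0 V).exists_analyticAt_rootMultiplicity_eq_one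
    (t₀ := 0) (by simpa [charpolyPencil_map_evalRingHom] using hE0)
  obtain ⟨r, hr, hball⟩ := Metric.eventually_nhds_iff_ball.1 hf
  refine ⟨r, hr, f, fun t ht => (hball t ht).1, hf₀, fun t ht => ?_⟩
  simpa [charpolyPencil_map_evalRingHom] using (hball t (mem_ball_zero_iff.2 ht)).2

/-- Analytic persistence of a simple eigenvalue: if `E0` is a simple eigenvalue of `H0`
(a root of multiplicity one of its characteristic polynomial), then there are `r > 0` and
`f` analytic on the ball of radius `r` about `0` with `f 0 = E0` such that `f λ` is a
simple eigenvalue of `H0 + λ·V` for all `|λ| < r`. -/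
theorem stmt_16 {N : ℕ} (hN : 0 < N) (H0 V : Matrix (Fin N) (Fin N) ℂ)
    (E0 : ℂ) (hE0 : H0.charpoly.rootMultiplicity E0 = 1) :
    ∃ r : ℝ, 0 < r ∧ ∃ f : ℂ → ℂ, AnalyticOnNhd ℂ f (Metric.ball 0 r) ∧ f 0 = E0 ∧
      ∀ lam : ℂ, ‖lam‖ < r → (H0 + lam • V).charpoly.rootMultiplicity (f lam) = 1 :=
  stmt_16_general H0 V E0 hE0
end
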